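/- arXiv:2410.00701 — 2 statements merged into one kernel-verified Lean document; each statement's English description precedes it below -/
import Mathlib

section
/- Assume Hypothesis (H). Let S_a = {s ∈ S : s + m ∉ S} and let C be the subgroup of ℤ/nℤ generated by {m} ∪ S_a. Then the partition of ℤ/nℤ into cosets of C is α-homogeneous: for every two-fold automorphism (σ₁, σ₂) of Γ and all x, y ∈ ℤ/nℤ with y − x ∈ C, one has σ₁⁻¹(σ₂(x)) − x = σ₁⁻¹(σ₂(y)) − y. -/
open SimpleGraph

/-- The tensor product of a simple graph with `K₂`, on vertex set `V × ZMod 2`. -/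
def tensorK2 {V : Type*} (Γ : SimpleGraph V) : SimpleGraph (V × ZMod 2) where
  Adj p q := Γ.Adj p.1 q.1 ∧ p.2 ≠ q.2
  symm := by
    constructor
    intro p q h
    exact ⟨h.1.symm, h.2.symm⟩
  loopless := by
    constructor
    intro p h
    exact h.2 rfl

/-- A graph `Γ` is stable if every automorphism of `Γ × K₂` is of the expected form
`(v,i) ↦ (σ v, i + ε)`. -/
def IsStable {V : Type*} (Γ : SimpleGraph V) : Prop :=
  ∀ φ : tensorK2 Γ ≃g tensorK2 Γ, ∃ σ : Γ ≃g Γ, ∃ ε : ZMod 2,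
    ∀ p : V × ZMod 2, φ p = (σ p.1, p.2 + ε)

/-- A pair of permutations `(σ₁, σ₂)` is a two-fold automorphism of `Γ` iff adjacency of
`v, w` is equivalent to adjacency of `σ₁ v, σ₂ w`. -/
def IsTwoFoldAuto {V : Type*} (Γ : SimpleGraph V) (σ₁ σ₂ : Equiv.Perm V) : Prop :=
  ∀ v w : V, Γ.Adj v w ↔ Γ.Adj (σ₁ v) (σ₂ w)

lemma zmod2_cases (i : ZMod 2) : i = 0 ∨ i = 1 := by revert i; decide

/-- Translation by `t` as an automorphism of `Γ × K₂` for a circulant `Γ`. -/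
def transIso {n : ℕ} (S : Set (ZMod n)) (t : ZMod n) :
    tensorK2 (circulantGraph S) ≃g tensorK2 (circulantGraph S) where
  toEquiv := (Equiv.addRight t).prodCongr (Equiv.refl (ZMod 2))
  map_rel_iff' := by
    rintro ⟨v, i⟩ ⟨w, j⟩
    show ((circulantGraph S).Adj (v + t) (w + t) ∧ i ≠ j) ↔ _
    rw [circulantGraph_adj_translate]
    rfl

/-- A two-fold automorphism of `Γ` gives an automorphism of `Γ × K₂` acting as `σ₁`
on layer `0` and as `σ₂` on layer `1`. -/
def tfIso {V : Type*} (Γ : SimpleGraph V) (σ₁ σ₂ : Equiv.Perm V)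
    (h : IsTwoFoldAuto Γ σ₁ σ₂) : tensorK2 Γ ≃g tensorK2 Γ where
  toEquiv :=
    { toFun := fun p => (if p.2 = 0 then σ₁ p.1 else σ₂ p.1, p.2)
      invFun := fun p => (if p.2 = 0 then σ₁⁻¹ p.1 else σ₂⁻¹ p.1, p.2)
      left_inv := by
        rintro ⟨v, i⟩
        by_cases hi : i = 0 <;> simp [hi]
      right_inv := by
        rintro ⟨v, i⟩
        by_cases hi : i = 0 <;> simp [hi] }
  map_rel_iff' := by
    rintro ⟨v, i⟩ ⟨w, j⟩
    show (Γ.Adj (if i = 0 then σ₁ v else σ₂ v) (if j = 0 then σ₁ w else σ₂ w) ∧ i ≠ j)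
      ↔ (Γ.Adj v w ∧ i ≠ j)
    rcases zmod2_cases i with hi | hi <;> rcases zmod2_cases j with hj | hj <;> subst hi hj
    · simp
    · rw [if_pos (show (0 : ZMod 2) = 0 from rfl), if_neg (show (1 : ZMod 2) ≠ 0 by decide)]
      exact and_congr_left fun _ => (h v w).symm
    · rw [if_neg (show (1 : ZMod 2) ≠ 0 by decide), if_pos (show (0 : ZMod 2) = 0 from rfl)]
      refine and_congr_left fun _ => ?_
      rw [Γ.adj_comm (σ₂ v) (σ₁ w), Γ.adj_comm v w]
      exact (h w v).symm
    · simp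

lemma delta_mem (m : ℕ) (S : Set (ZMod (2 * m)))
    (horb : {p : ZMod (2 * m) × ZMod 2 |
        ∃ φ : tensorK2 (circulantGraph S) ≃g tensorK2 (circulantGraph S),
          φ (0, 0) = (0, 0) ∧ φ (0, 1) = p} =
      {((0 : ZMod (2 * m)), (1 : ZMod 2)), ((m : ZMod (2 * m)), (1 : ZMod 2))})
    (σ₁ σ₂ : Equiv.Perm (ZMod (2 * m)))
    (h : IsTwoFoldAuto (circulantGraph S) σ₁ σ₂) (x : ZMod (2 * m)) :
    σ₂ x - σ₁ x = 0 ∨ σ₂ x - σ₁ x = (m : ZMod (2 * m)) := by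
  have hmem : ((σ₂ x - σ₁ x, 1) : ZMod (2 * m) × ZMod 2) ∈
      {p : ZMod (2 * m) × ZMod 2 |
        ∃ φ : tensorK2 (circulantGraph S) ≃g tensorK2 (circulantGraph S),
          φ (0, 0) = (0, 0) ∧ φ (0, 1) = p} := by
    refine ⟨(transIso S x).trans ((tfIso _ σ₁ σ₂ h).trans (transIso S (-(σ₁ x)))), ?_, ?_⟩
    · show ((if (0 : ZMod 2) = 0 then σ₁ ((0 : ZMod (2*m)) + x) else σ₂ (0 + x))
          + -(σ₁ x), (0 : ZMod 2)) = ((0 : ZMod (2*m)), (0 : ZMod 2))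
      rw [if_pos rfl, zero_add, add_neg_cancel]
    · show ((if (1 : ZMod 2) = 0 then σ₁ ((0 : ZMod (2*m)) + x) else σ₂ (0 + x))
          + -(σ₁ x), (1 : ZMod 2)) = (σ₂ x - σ₁ x, (1 : ZMod 2))
      rw [if_neg (by decide : (1 : ZMod 2) ≠ 0), zero_add, sub_eq_add_neg]
  rw [horb] at hmem
  rcases hmem with hm | hm
  · exact Or.inl (congrArg Prod.fst hm)
  · exact Or.inr (congrArg Prod.fst hm)

/-- Under Hypothesis (H), with `S_a = {s ∈ S : s + m ∉ S}` and `C` the subgroup generated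
by `{m} ∪ S_a`, the partition into cosets of `C` is `α`-homogeneous: for every two-fold
automorphism `(σ₁, σ₂)` and all `x, y` in the same coset of `C`,
`σ₁⁻¹(σ₂ x) − x = σ₁⁻¹(σ₂ y) − y`. -/
theorem coset_partition_of_C_is_alpha_homogeneous
    (m : ℕ) (hm : 1 < m) (hodd : Odd m)
    (S : Set (ZMod (2 * m))) (hSsymm : ∀ s, s ∈ S ↔ -s ∈ S)
    (hS0 : (0 : ZMod (2 * m)) ∉ S)
    (hconn : (circulantGraph S).Connected)
    (hnbip : ¬ (circulantGraph S).Colorable 2)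
    (hred : ∀ v w : ZMod (2 * m),
      (circulantGraph S).neighborSet v = (circulantGraph S).neighborSet w → v = w)
    (hunst : ¬ IsStable (circulantGraph S))
    (horb : {p : ZMod (2 * m) × ZMod 2 |
        ∃ φ : tensorK2 (circulantGraph S) ≃g tensorK2 (circulantGraph S),
          φ (0, 0) = (0, 0) ∧ φ (0, 1) = p} =
      {((0 : ZMod (2 * m)), (1 : ZMod 2)), ((m : ZMod (2 * m)), (1 : ZMod 2))}) :
    ∀ σ₁ σ₂ : Equiv.Perm (ZMod (2 * m)), IsTwoFoldAuto (circulantGraph S) σ₁ σ₂ →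
      ∀ x y : ZMod (2 * m),
        y - x ∈ AddSubgroup.closure
          (insert (m : ZMod (2 * m)) {s | s ∈ S ∧ s + (m : ZMod (2 * m)) ∉ S}) →
        σ₁⁻¹ (σ₂ x) - x = σ₁⁻¹ (σ₂ y) - y := by
  intro σ₁ σ₂ htf x y hC
  set α : ZMod (2 * m) → ZMod (2 * m) := fun z => σ₁⁻¹ (σ₂ z) - z with hαdef
  -- basic arithmetic facts
  have hm2 : (m : ZMod (2 * m)) + m = 0 := by
    have h2 : ((2 * m : ℕ) : ZMod (2 * m)) = 0 := ZMod.natCast_self _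
    push_cast at h2
    linear_combination h2
  have hnegm : -(m : ZMod (2 * m)) = (m : ZMod (2 * m)) :=
    neg_eq_of_add_eq_zero_left hm2
  have hmne : (m : ZMod (2 * m)) ≠ 0 := by
    intro h0
    rw [ZMod.natCast_eq_zero_iff] at h0
    have := Nat.le_of_dvd (by omega) h0
    omega
  -- τ : z ↦ z + α z satisfies σ₁ (z + α z) = σ₂ z
  have hτ : ∀ z, σ₁ (z + α z) = σ₂ z := by
    intro z
    rw [hαdef]
    simp
  -- the values of α are in {0, m}
  have htf' : IsTwoFoldAuto (circulantGraph S) σ₁⁻¹ σ₂⁻¹ := by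
    intro v w
    have := htf (σ₁⁻¹ v) (σ₂⁻¹ w)
    simpa using this.symm
  have hα : ∀ z, α z = 0 ∨ α z = m := by
    intro z
    have hd := delta_mem m S horb σ₁⁻¹ σ₂⁻¹ htf' (σ₂ z)
    simp only [show σ₂⁻¹ (σ₂ z) = z from σ₂.symm_apply_apply z] at hd
    rcases hd with hd | hd
    · left
      rw [hαdef]
      simp only [sub_eq_zero] at hd ⊢
      exact hd.symm
    · right
      rw [hαdef]
      show σ₁⁻¹ (σ₂ z) - z = m
      have : -(σ₁⁻¹ (σ₂ z) - z) = m := by rwa [neg_sub]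
      rw [← hnegm, ← this, neg_neg]
  -- injectivity of z ↦ z + α z
  have hinj : ∀ a b : ZMod (2 * m), a + α a = b + α b → a = b := by
    intro a b hab
    have : σ₂ a = σ₂ b := by rw [← hτ a, ← hτ b, hab]
    exact σ₂.injective this
  -- α is invariant under adding m
  have hαm : ∀ z, α (z + m) = α z := by
    intro z
    rcases hα z with h1 | h1 <;> rcases hα (z + m) with h2 | h2
    · rw [h1, h2]
    · exfalso
      have : z + α z = (z + m) + α (z + m) := by
        rw [h1, h2, add_zero, add_assoc, hm2, add_zero]
      have := hinj _ _ this
      exact hmne (by linear_combination -this)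
    · exfalso
      have : z + α z = (z + m) + α (z + m) := by rw [h1, h2, add_zero]
      have := hinj _ _ this
      exact hmne (by linear_combination -this)
    · rw [h1, h2]
  -- adjacency facts in the circulant graph
  have hadj : ∀ z s, s ∈ S → (circulantGraph S).Adj z (z + s) := by
    intro z s hs
    rw [circulantGraph_adj]
    constructor
    · intro hzz
      have hs0 : s = 0 := by linear_combination -hzz
      rw [hs0] at hs
      exact hS0 hs
    · right
      simpa using hs
  have hnadj : ∀ z w, w - z ∉ S → ¬ (circulantGraph S).Adj z w := by
    intro z w hw hA
    rw [circulantGraph_adj] at hA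
    rcases hA.2 with h' | h'
    · exact hw (by rw [hSsymm]; simpa using h')
    · exact hw h'
  -- the two key adjacency transfer relations
  have R1 : ∀ v w, (circulantGraph S).Adj (σ₁ v) (σ₁ (w + α w)) ↔ (circulantGraph S).Adj v w := by
    intro v w
    rw [hτ w]
    exact (htf v w).symm
  have R2 : ∀ v w, (circulantGraph S).Adj (σ₁ (v + α v)) (σ₁ w) ↔ (circulantGraph S).Adj v w := by
    intro v w
    rw [hτ v, (circulantGraph S).adj_comm (σ₂ v) (σ₁ w), (circulantGraph S).adj_comm v w]
    exact (htf w v).symm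
  -- α is invariant under adding s ∈ S_a
  have hαS : ∀ s, s ∈ S → s + (m : ZMod (2 * m)) ∉ S → ∀ z, α (z + s) = α z := by
    intro s hs hsm z
    rcases hα z with h1 | h1 <;> rcases hα (z + s) with h2 | h2
    · rw [h1, h2]
    · exfalso
      have hA : (circulantGraph S).Adj (σ₁ z) (σ₁ (z + s)) := by
        have := R2 z (z + s)
        rw [h1, add_zero] at this
        exact this.mpr (hadj z s hs)
      have hB : ¬ (circulantGraph S).Adj (σ₁ z) (σ₁ (z + s)) := by
        have hrw := R1 z (z + s + m)
        rw [hαm (z + s), h2] at hrw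
        have e : z + s + m + m = z + s := by rw [add_assoc (z + s), hm2, add_zero]
        rw [e] at hrw
        intro hA'
        have hadj' := hrw.mp hA'
        exact hnadj z (z + s + m) (by simpa [add_assoc] using hsm) hadj'
      exact hB hA
    · exfalso
      have hA : (circulantGraph S).Adj (σ₁ (z + m)) (σ₁ (z + s)) := by
        have := R2 z (z + s)
        rw [h1] at this
        exact this.mpr (hadj z s hs)
      have hB : ¬ (circulantGraph S).Adj (σ₁ (z + m)) (σ₁ (z + s)) := by
        have hrw := R1 (z + m) (z + s)
        rw [h2, add_zero] at hrw
        intro hA'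
        have hadj' := hrw.mp hA'
        refine hnadj (z + m) (z + s) ?_ hadj'
        have e : z + s - (z + m) = s + m := by linear_combination -hm2
        rwa [e]
      exact hB hA
    · rw [h1, h2]
  -- subgroup of periods of α
  let H : AddSubgroup (ZMod (2 * m)) :=
    { carrier := {d | ∀ z, α (z + d) = α z}
      zero_mem' := fun z => by rw [add_zero]
      add_mem' := by
        intro a b ha hb z
        rw [← add_assoc, hb (z + a), ha z]
      neg_mem' := by
        intro a ha z
        have := ha (z + -a)
        rw [neg_add_cancel_right] at this
        exact this.symm }
  have hle : AddSubgroup.closure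
      (insert (m : ZMod (2 * m)) {s | s ∈ S ∧ s + (m : ZMod (2 * m)) ∉ S}) ≤ H := by
    rw [AddSubgroup.closure_le]
    intro d hd
    rcases hd with rfl | hd
    · exact hαm
    · exact hαS d hd.1 hd.2
  have hxy : α (x + (y - x)) = α x := hle hC x
  rw [add_sub_cancel] at hxy
  rw [hαdef] at hxy
  simpa using hxy.symm
end

section
/- Let m be a positive integer, S₁,…,S_k ⊆ ℤ/mℤ with DiCay(ℤ/mℤ, S₁,…,S_k) reduced, let l be a positive integer coprime to m, and let ψ_l : ℤ/mℤ → ℤ/mℤ be the permutation x ↦ l·x. If (σ_i)_{i∈ℤ} and (τ_i)_{i∈ℤ} are chain automorphisms of DiCay(ℤ/mℤ, S₁,…,S_k) with τ_0 = ψ_l⁻¹ ∘ σ_0 ∘ ψ_l, then σ_l = ψ_l ∘ τ_1 ∘ ψ_l⁻¹. (This is the pointwise form of the identity ι(ψ_l) ∘ γ ∘ ι(ψ_l)⁻¹ = γ^l on the group of chain projections, where γ is the shift automorphism and ι(ψ_l) is conjugation by ψ_l.) -/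
/-- A chain automorphism of the colored directed circulant `DiCay(ℤ/mℤ, S₁, …, S_k)`:
a family `(σ_i)_{i ∈ ℤ}` of permutations such that for every level `i`, every color `j`
and all vertices `x, y`: `y − x ∈ S_j ↔ σ_{i+1}(y) − σ_i(x) ∈ S_j`. -/
def IsChainAuto {m k : ℕ} (S : Fin k → Set (ZMod m)) (σ : ℤ → Equiv.Perm (ZMod m)) : Prop :=
  ∀ (i : ℤ) (j : Fin k) (x y : ZMod m), y - x ∈ S j ↔ σ (i + 1) y - σ i x ∈ S j

namespace ChainAux

attribute [local instance] Classical.propDecidable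

variable {m k : ℕ} (S : Fin k → Set (ZMod m))

/-- conjugation of a permutation by multiplication by a unit -/
def conjP (u : (ZMod m)ˣ) (π : Equiv.Perm (ZMod m)) : Equiv.Perm (ZMod m) :=
  (Units.mulLeft u).trans (π.trans (Units.mulLeft u⁻¹))

@[simp] lemma conjP_apply (u : (ZMod m)ˣ) (π : Equiv.Perm (ZMod m)) (x : ZMod m) :
    conjP u π x = ↑u⁻¹ * π (↑u * x) := rfl

lemma chain_congr {S : Fin k → Set (ZMod m)} {σ σ' : ℤ → Equiv.Perm (ZMod m)}
    (hσ : IsChainAuto S σ) (h : ∀ i x, σ i x = σ' i x) : IsChainAuto S σ' := by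
  intro i j x y
  rw [← h i x, ← h (i+1) y]
  exact hσ i j x y

/-- rigidity: in a reduced circulant, the next level of a chain automorphism is
determined by the current level -/
lemma chain_succ_eq
    {S : Fin k → Set (ZMod m)}
    (hred : ¬ ∃ h : ZMod m, h ≠ 0 ∧ ∀ j : Fin k, (fun s => s + h) '' S j = S j)
    {σ τ : ℤ → Equiv.Perm (ZMod m)}
    (hσ : IsChainAuto S σ) (hτ : IsChainAuto S τ) (i : ℤ)
    (h0 : ∀ x, σ i x = τ i x) : ∀ y, σ (i + 1) y = τ (i + 1) y := by
  intro y
  set h : ZMod m := τ (i+1) y - σ (i+1) y with hh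
  have key : ∀ (j : Fin k) (u : ZMod m), u ∈ S j ↔ u + h ∈ S j := by
    intro j u
    set x : ZMod m := (σ i).symm (σ (i+1) y - u) with hx
    have hσx : σ i x = σ (i+1) y - u := by simp [hx]
    have h1 : y - x ∈ S j ↔ u ∈ S j := by
      rw [hσ i j x y, hσx]; constructor <;> intro hmem <;>
        simpa [sub_sub_cancel] using hmem
    have h2 : y - x ∈ S j ↔ u + h ∈ S j := by
      rw [hτ i j x y, ← h0 x, hσx, hh]
      constructor <;> intro hmem
      · have e1 : τ (i+1) y - (σ (i+1) y - u) = u + (τ (i+1) y - σ (i+1) y) := by ring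
        rwa [e1] at hmem
      · have e1 : τ (i+1) y - (σ (i+1) y - u) = u + (τ (i+1) y - σ (i+1) y) := by ring
        rwa [e1]
    rw [← h1, h2]
  have himg : ∀ j : Fin k, (fun s => s + h) '' S j = S j := by
    intro j
    ext a
    constructor
    · rintro ⟨s, hs, rfl⟩
      exact (key j s).mp hs
    · intro ha
      refine ⟨a - h, ?_, by ring⟩
      have h3 := (key j (a - h)).symm
      rw [sub_add_cancel] at h3
      exact h3.mp ha
  have hz : h = 0 := by
    by_contra hne
    exact hred ⟨h, hne, himg⟩
  exact (sub_eq_zero.mp hz).symm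

/-- number of `t`-tuples of elements of `S j` summing to `d` -/
noncomputable def N (j : Fin k) (t : ℕ) (d : ZMod m) : ℕ :=
  Nat.card {f : Fin t → ZMod m // (∀ r, f r ∈ S j) ∧ ∑ r, f r = d}

lemma nat_card_sigma {ι : Type*} [Fintype ι] (B : ι → Type*) [∀ i, Fintype (B i)] :
    Nat.card (Σ i, B i) = ∑ i, Nat.card (B i) := by
  simp [Nat.card_eq_fintype_card]

lemma N_decomp [NeZero m] (j : Fin k) (t : ℕ) (d : ZMod m) :
    N S j (t+1) d = ∑ a : {a : ZMod m // a ∈ S j}, N S j t (d - ↑a) := by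
  classical
  have E : {f : Fin (t+1) → ZMod m // (∀ r, f r ∈ S j) ∧ ∑ r, f r = d} ≃
      Σ a : {a : ZMod m // a ∈ S j},
        {g : Fin t → ZMod m // (∀ r, g r ∈ S j) ∧ ∑ r, g r = d - ↑a} :=
    { toFun := fun f => ⟨⟨f.1 0, f.2.1 0⟩, ⟨Fin.tail f.1, fun r => f.2.1 r.succ, by
        have hs := f.2.2
        rw [Fin.sum_univ_succ] at hs
        have h2 : ∑ r : Fin t, Fin.tail f.1 r = ∑ r : Fin t, f.1 r.succ := rfl
        rw [h2]
        exact eq_sub_of_add_eq' hs⟩⟩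
      invFun := fun ag => ⟨Fin.cons ag.1.1 ag.2.1, by
        constructor
        · intro r
          refine Fin.cases ?_ ?_ r
          · simpa using ag.1.2
          · intro q; simpa using ag.2.2.1 q
        · rw [Fin.sum_univ_succ]
          simp only [Fin.cons_zero, Fin.cons_succ]
          have h3 : ∑ r : Fin t, ag.2.1 r = d - ↑ag.1 := ag.2.2.2
          rw [h3]; ring⟩
      left_inv := fun f => Subtype.ext (Fin.cons_self_tail f.1)
      right_inv := fun ag => by
        rcases ag with ⟨⟨a, ha⟩, ⟨g, hg⟩⟩
        rfl }
  rw [N, Nat.card_congr E, nat_card_sigma]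
  rfl

/-- the one-step neighbour bijection induced by a chain automorphism -/
noncomputable def stepEquiv {σ : ℤ → Equiv.Perm (ZMod m)}
    (hσ : IsChainAuto S σ) (i : ℤ) (j : Fin k) (v : ZMod m) :
    {a : ZMod m // a ∈ S j} ≃ {a : ZMod m // a ∈ S j} where
  toFun := fun a => ⟨σ (i+1) (v + ↑a) - σ i v, by
    have h1 := (hσ i j v (v + ↑a)).mp (by simpa using a.2)
    exact h1⟩
  invFun := fun b => ⟨(σ (i+1)).symm (σ i v + ↑b) - v, by
    have h1 := (hσ i j v ((σ (i+1)).symm (σ i v + ↑b))).mpr (by simpa using b.2)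
    exact h1⟩
  left_inv := fun a => Subtype.ext (by simp)
  right_inv := fun b => Subtype.ext (by simp)

@[simp] lemma stepEquiv_coe {σ : ℤ → Equiv.Perm (ZMod m)}
    (hσ : IsChainAuto S σ) (i : ℤ) (j : Fin k) (v : ZMod m)
    (a : {a : ZMod m // a ∈ S j}) :
    (↑(stepEquiv S hσ i j v a) : ZMod m) = σ (i+1) (v + ↑a) - σ i v := rfl

lemma N_invariance [NeZero m] {σ : ℤ → Equiv.Perm (ZMod m)}
    (hσ : IsChainAuto S σ) (j : Fin k) :
    ∀ (t : ℕ) (i : ℤ) (v w : ZMod m),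
      N S j t (w - v) = N S j t (σ (i + (t : ℤ)) w - σ i v) := by
  intro t
  induction t with
  | zero =>
    intro i v w
    refine Nat.card_congr (Equiv.subtypeEquivRight fun f => ?_)
    simp only [Finset.univ_eq_empty, Finset.sum_empty, Nat.cast_zero, add_zero]
    constructor
    · rintro ⟨h1, h2⟩
      have hw : w = v := sub_eq_zero.mp h2.symm
      exact ⟨h1, by rw [hw]; ring⟩
    · rintro ⟨h1, h2⟩
      have hw : σ i w = σ i v := sub_eq_zero.mp h2.symm
      have h3 := (σ i).injective hw
      exact ⟨h1, by rw [h3]; ring⟩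
  | succ t ih =>
    intro i v w
    calc N S j (t+1) (w - v)
        = ∑ a : {a : ZMod m // a ∈ S j}, N S j t (w - v - ↑a) := N_decomp S j t _
      _ = ∑ a : {a : ZMod m // a ∈ S j},
            N S j t (σ ((i+1) + (t:ℤ)) w - (σ i v + ↑(stepEquiv S hσ i j v a))) := by
          refine Finset.sum_congr rfl fun a _ => ?_
          have h1 : w - v - ↑a = w - (v + ↑a) := by ring
          rw [h1, ih (i+1) (v + ↑a) w]
          congr 1
          show _ = σ ((i+1) + (t:ℤ)) w - (σ i v + (σ (i+1) (v + ↑a) - σ i v))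
          ring
      _ = ∑ b : {a : ZMod m // a ∈ S j},
            N S j t (σ ((i+1) + (t:ℤ)) w - (σ i v + ↑b)) :=
          Fintype.sum_equiv (stepEquiv S hσ i j v) _ _ (fun a => rfl)
      _ = ∑ b : {a : ZMod m // a ∈ S j},
            N S j t ((σ (i + ((t:ℕ)+1 : ℤ)) w - σ i v) - ↑b) := by
          refine Finset.sum_congr rfl fun b _ => ?_
          have h1 : (i+1) + (t:ℤ) = i + ((t:ℕ)+1 : ℤ) := by ring
          rw [h1]
          congr 1
          ring
      _ = N S j (t+1) (σ (i + ((t+1 : ℕ):ℤ)) w - σ i v) := by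
          rw [N_decomp S j t _]
          push_cast
          rfl

lemma N_rot [NeZero m] {p : ℕ} (hp : p.Prime) (hcop : Nat.Coprime p m)
    (j : Fin k) (d : ZMod m) :
    N S j p d ≡ (if ∃ c ∈ S j, (p : ZMod m) * c = d then 1 else 0) [MOD p] := by
  haveI : NeZero p := ⟨hp.pos.ne'⟩
  set A := {f : ZMod p → ZMod m // (∀ r, f r ∈ S j) ∧ ∑ r, f r = d} with hA
  have e0 : ZMod p ≃ Fin p := Fintype.equivFinOfCardEq (ZMod.card p)
  have hNA : N S j p d = Nat.card A := by
    refine Nat.card_congr ?_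
    exact
      { toFun := fun f => ⟨f.1 ∘ e0, fun r => f.2.1 _,
          (Equiv.sum_comp e0 f.1).trans f.2.2⟩
        invFun := fun g => ⟨g.1 ∘ e0.symm, fun r => g.2.1 _,
          (Equiv.sum_comp e0.symm g.1).trans g.2.2⟩
        left_inv := fun f => Subtype.ext (by funext r; simp)
        right_inv := fun g => Subtype.ext (by funext r; simp) }
  letI : SMul (Multiplicative (ZMod p)) A :=
    ⟨fun g f => ⟨fun r => f.1 (r + g.toAdd), fun r => f.2.1 _,
      (Fintype.sum_equiv (Equiv.addRight g.toAdd) _ _ (fun r => rfl)).trans f.2.2⟩⟩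
  letI : MulAction (Multiplicative (ZMod p)) A :=
    { one_smul := fun f => Subtype.ext (by funext r; show f.1 (r + _) = f.1 r; simp)
      mul_smul := fun g h f => Subtype.ext (by
        funext r
        show f.1 (r + (g * h).toAdd) = f.1 (r + g.toAdd + h.toAdd)
        rw [toAdd_mul]; ring_nf) }
  haveI : Fact p.Prime := ⟨hp⟩
  have hG : IsPGroup p (Multiplicative (ZMod p)) := by
    refine IsPGroup.of_card (n := 1) ?_
    rw [Nat.card_congr Multiplicative.toAdd, Nat.card_zmod, pow_one]
  have key := hG.card_modEq_card_fixedPoints A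
  have hconst : ∀ x : A, x ∈ MulAction.fixedPoints (Multiplicative (ZMod p)) A →
      ∀ r : ZMod p, x.1 r = x.1 0 := by
    intro x hx r
    have h1 := hx (Multiplicative.ofAdd r)
    have h2 := congrArg Subtype.val h1
    have h3 := congrFun h2 0
    show x.1 r = x.1 0
    calc x.1 r = x.1 (0 + (Multiplicative.ofAdd r).toAdd) := by simp
      _ = x.1 0 := h3
  have hsumconst : ∀ x : A, (∀ r : ZMod p, x.1 r = x.1 0) →
      (p : ZMod m) * x.1 0 = d := by
    intro x hx
    calc (p : ZMod m) * x.1 0 = ∑ _r : ZMod p, x.1 0 := by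
          rw [Finset.sum_const, Finset.card_univ, ZMod.card, nsmul_eq_mul]
      _ = ∑ r : ZMod p, x.1 r := Finset.sum_congr rfl fun r _ => (hx r).symm
      _ = d := x.2.2
  have hfix : Nat.card (MulAction.fixedPoints (Multiplicative (ZMod p)) A) =
      if ∃ c ∈ S j, (p : ZMod m) * c = d then 1 else 0 := by
    by_cases hQ : ∃ c ∈ S j, (p : ZMod m) * c = d
    · rw [if_pos hQ]
      obtain ⟨c₀, hc₀S, hc₀⟩ := hQ
      rw [Nat.card_eq_one_iff_unique]
      have pu : IsUnit (p : ZMod m) := by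
        rw [← ZMod.coe_unitOfCoprime p hcop]; exact (ZMod.unitOfCoprime p hcop).isUnit
      constructor
      · constructor
        intro x y
        have hxc := hconst x.1 x.2
        have hyc := hconst y.1 y.2
        have hx0 := hsumconst x.1 hxc
        have hy0 := hsumconst y.1 hyc
        have hxy : (x.1 : A).1 0 = (y.1 : A).1 0 :=
          pu.mul_left_cancel (hx0.trans hy0.symm)
        refine Subtype.ext (Subtype.ext (funext fun r => ?_))
        rw [hxc r, hyc r, hxy]
      · refine ⟨⟨⟨fun _ => c₀, fun _ => hc₀S, ?_⟩, ?_⟩⟩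
        · rw [Finset.sum_const, Finset.card_univ, ZMod.card, nsmul_eq_mul, hc₀]
        · intro g
          exact Subtype.ext (by funext r; rfl)
    · rw [if_neg hQ]
      haveI : IsEmpty (MulAction.fixedPoints (Multiplicative (ZMod p)) A) := by
        constructor
        intro x
        exact hQ ⟨x.1.1 0, x.1.2.1 0, hsumconst x.1 (hconst x.1 x.2)⟩
      exact Nat.card_of_isEmpty
  rw [hNA, ← hfix]
  exact key

lemma prime_step [NeZero m] {σ : ℤ → Equiv.Perm (ZMod m)} (hσ : IsChainAuto S σ)
    {p : ℕ} (hp : p.Prime) (hcop : Nat.Coprime p m)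
    (i : ℤ) (v w : ZMod m) (j : Fin k) :
    (∃ c ∈ S j, (p : ZMod m) * c = w - v) ↔
      (∃ c ∈ S j, (p : ZMod m) * c = σ (i + (p : ℤ)) w - σ i v) := by
  have h1 := N_rot S hp hcop j (w - v)
  have h2 := N_rot S hp hcop j (σ (i + (p : ℤ)) w - σ i v)
  have h3 := N_invariance S hσ j p i v w
  have hmod : (if ∃ c ∈ S j, (p : ZMod m) * c = w - v then 1 else 0) ≡
      (if ∃ c ∈ S j, (p : ZMod m) * c = σ (i + (p : ℤ)) w - σ i v then 1 else 0)
      [MOD p] :=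
    h1.symm.trans (by rw [h3]; exact h2)
  have h4 : (if ∃ c ∈ S j, (p : ZMod m) * c = w - v then 1 else 0) =
      (if ∃ c ∈ S j, (p : ZMod m) * c = σ (i + (p : ℤ)) w - σ i v then 1 else 0) := by
    have hlt1 : (if ∃ c ∈ S j, (p : ZMod m) * c = w - v then 1 else 0) < p := by
      split_ifs
      · exact hp.one_lt
      · exact hp.pos
    have hlt2 : (if ∃ c ∈ S j, (p : ZMod m) * c = σ (i + (p : ℤ)) w - σ i v
        then 1 else 0) < p := by
      split_ifs
      · exact hp.one_lt
      · exact hp.pos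
    have h5 := hmod
    rwa [Nat.ModEq, Nat.mod_eq_of_lt hlt1, Nat.mod_eq_of_lt hlt2] at h5
  by_cases hA : ∃ c ∈ S j, (p : ZMod m) * c = w - v <;>
    by_cases hB : ∃ c ∈ S j, (p : ZMod m) * c = σ (i + (p : ℤ)) w - σ i v <;>
    simp [hA, hB] at h4 ⊢ <;> tauto

lemma prime_scale [NeZero m] {σ : ℤ → Equiv.Perm (ZMod m)} (hσ : IsChainAuto S σ)
    {p : ℕ} (hp : p.Prime) (hcop : Nat.Coprime p m)
    (u : (ZMod m)ˣ) (hu : (↑u : ZMod m) = (p : ZMod m)) :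
    IsChainAuto S (fun i => conjP u (σ ((p : ℤ) * i))) := by
  intro i j x y
  simp only [conjP_apply]
  have hps := prime_step S hσ hp hcop ((p:ℤ)*i) (↑u * x) (↑u * y) j
  have hidx : (p:ℤ)*i + (p:ℤ) = (p:ℤ)*(i+1) := by ring
  rw [hidx] at hps
  constructor
  · intro hmem
    have h1 : ∃ c ∈ S j, (p : ZMod m) * c = ↑u * y - ↑u * x :=
      ⟨y - x, hmem, by rw [hu]; ring⟩
    obtain ⟨c, hc, hceq⟩ := hps.mp h1
    have h2 : ↑u⁻¹ * σ ((p:ℤ)*(i+1)) (↑u*y) - ↑u⁻¹ * σ ((p:ℤ)*i) (↑u*x) = c := by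
      have h3 : σ ((p:ℤ)*(i+1)) (↑u*y) - σ ((p:ℤ)*i) (↑u*x) = ↑u * c := by
        conv_rhs => rw [hu]
        exact hceq.symm
      calc ↑u⁻¹ * σ ((p:ℤ)*(i+1)) (↑u*y) - ↑u⁻¹ * σ ((p:ℤ)*i) (↑u*x)
          = ↑u⁻¹ * (σ ((p:ℤ)*(i+1)) (↑u*y) - σ ((p:ℤ)*i) (↑u*x)) := by ring
        _ = ↑u⁻¹ * (↑u * c) := by rw [h3]
        _ = c := by rw [← mul_assoc, Units.inv_mul, one_mul]
    rw [h2]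
    exact hc
  · intro hmem
    have h1 : ∃ c ∈ S j, (p : ZMod m) * c =
        σ ((p:ℤ)*(i+1)) (↑u*y) - σ ((p:ℤ)*i) (↑u*x) := by
      refine ⟨↑u⁻¹ * σ ((p:ℤ)*(i+1)) (↑u*y) - ↑u⁻¹ * σ ((p:ℤ)*i) (↑u*x), hmem, ?_⟩
      rw [hu.symm]
      calc (↑u : ZMod m) * (↑u⁻¹ * σ ((p:ℤ)*(i+1)) (↑u*y) - ↑u⁻¹ * σ ((p:ℤ)*i) (↑u*x))
          = (↑u * ↑u⁻¹) * σ ((p:ℤ)*(i+1)) (↑u*y)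
            - (↑u * ↑u⁻¹) * σ ((p:ℤ)*i) (↑u*x) := by ring
        _ = σ ((p:ℤ)*(i+1)) (↑u*y) - σ ((p:ℤ)*i) (↑u*x) := by
            rw [Units.mul_inv, one_mul, one_mul]
    obtain ⟨c, hc, hceq⟩ := hps.mpr h1
    have h2 : c = y - x := by
      have h3 : (↑u : ZMod m) * c = ↑u * (y - x) := by
        conv_lhs => rw [hu]
        rw [hceq]; ring
      exact u.isUnit.mul_left_cancel h3
    rwa [h2] at hc

lemma scale_chain [NeZero m] : ∀ n : ℕ, 0 < n → Nat.Coprime n m →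
    ∀ σ : ℤ → Equiv.Perm (ZMod m), IsChainAuto S σ →
    ∀ u : (ZMod m)ˣ, (↑u : ZMod m) = (n : ZMod m) →
    IsChainAuto S (fun i => conjP u (σ ((n : ℤ) * i))) := by
  intro n
  induction n using Nat.strong_induction_on with
  | _ n ih =>
  intro hn hcop σ hσ u hu
  by_cases h1 : n = 1
  · subst h1
    have hu1 : u = 1 := Units.ext (by rw [hu]; simp)
    refine chain_congr hσ ?_
    intro i x
    simp [conjP_apply, hu1]
  · have hp : Nat.Prime n.minFac := Nat.minFac_prime h1
    set p := n.minFac with hpdef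
    set q := n / p with hqdef
    have hpq : p * q = n := Nat.mul_div_cancel' n.minFac_dvd
    have hq0 : 0 < q := by
      rcases Nat.eq_zero_or_pos q with h | h
      · rw [h, mul_zero] at hpq; omega
      · exact h
    have hqlt : q < n := Nat.div_lt_self hn hp.one_lt
    have hpcop : Nat.Coprime p m := Nat.Coprime.coprime_dvd_left n.minFac_dvd hcop
    have hqcop : Nat.Coprime q m :=
      Nat.Coprime.coprime_dvd_left ⟨p, by rw [mul_comm]; exact hpq.symm⟩ hcop
    set up := ZMod.unitOfCoprime p hpcop with hupdef
    set uq := ZMod.unitOfCoprime q hqcop with huqdef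
    have hσ' := prime_scale S hσ hp hpcop up (ZMod.coe_unitOfCoprime p hpcop)
    have hcomp := ih q hqlt hq0 hqcop _ hσ' uq (ZMod.coe_unitOfCoprime q hqcop)
    refine chain_congr hcomp ?_
    intro i x
    simp only [conjP_apply]
    have huu : u = up * uq := Units.ext (by
      rw [hu, Units.val_mul, ZMod.coe_unitOfCoprime, ZMod.coe_unitOfCoprime,
        ← Nat.cast_mul, hpq])
    have hidx : (p:ℤ) * ((q:ℤ) * i) = (n:ℤ) * i := by
      rw [← hpq]; push_cast; ring
    rw [hidx, huu, mul_inv_rev, Units.val_mul, Units.val_mul, mul_assoc]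
    congr 2
    rw [← mul_assoc]

end ChainAux

/-- Pointwise form of `ι(ψ_l) ∘ γ ∘ ι(ψ_l)⁻¹ = γ^l` for a reduced colored directed
circulant: if `(σ_i)` and `(τ_i)` are chain automorphisms with
`τ₀ = ψ_l⁻¹ ∘ σ₀ ∘ ψ_l` (i.e. `l · τ₀(x) = σ₀(l · x)` for all `x`), then
`σ_l = ψ_l ∘ τ₁ ∘ ψ_l⁻¹` (i.e. `σ_l(l · x) = l · τ₁(x)` for all `x`). -/
theorem chainAuto_conj_shift_pow
    (m k : ℕ) (hm : 0 < m) (S : Fin k → Set (ZMod m))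
    (hred : ¬ ∃ h : ZMod m, h ≠ 0 ∧ ∀ j : Fin k, (fun s => s + h) '' S j = S j)
    (l : ℕ) (hl : 0 < l) (hcop : Nat.Coprime l m)
    (σ τ : ℤ → Equiv.Perm (ZMod m))
    (hσ : IsChainAuto S σ) (hτ : IsChainAuto S τ)
    (hconj : ∀ x : ZMod m, (l : ZMod m) * τ 0 x = σ 0 ((l : ZMod m) * x)) :
    ∀ x : ZMod m, σ (l : ℤ) ((l : ZMod m) * x) = (l : ZMod m) * τ 1 x := by
  haveI : NeZero m := ⟨hm.ne'⟩
  set u := ZMod.unitOfCoprime l hcop with hudef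
  have hu : (↑u : ZMod m) = (l : ZMod m) := ZMod.coe_unitOfCoprime l hcop
  have hη : IsChainAuto S (fun i => ChainAux.conjP u (σ ((l : ℤ) * i))) :=
    ChainAux.scale_chain S l hl hcop σ hσ u hu
  have h0 : ∀ x, (fun i => ChainAux.conjP u (σ ((l : ℤ) * i))) 0 x = τ 0 x := by
    intro x
    simp only [ChainAux.conjP_apply, mul_zero]
    rw [hu, ← hconj x, ← hu, ← mul_assoc, Units.inv_mul, one_mul]
  have h1 := ChainAux.chain_succ_eq hred hη hτ 0 h0
  intro x
  have h2 := h1 x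
  simp only [ChainAux.conjP_apply, zero_add, mul_one] at h2
  calc σ (l : ℤ) ((l : ZMod m) * x)
      = ↑u * (↑u⁻¹ * σ ((l:ℤ)) (↑u * x)) := by
        rw [← mul_assoc, Units.mul_inv, one_mul, hu]
    _ = ↑u * τ 1 x := by rw [h2]
    _ = (l : ZMod m) * τ 1 x := by rw [hu]
end
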